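/- There exists a constant C > 0 such that for all smooth compactly supported functions f, g, h : ℝ³ → ℝ, ∫_{ℝ³₊} |f·g·h| dx ≤ C · ‖f‖_{L²}^{1/2} ‖∂₁f‖_{L²}^{1/2} · ‖g‖_{L²}^{1/2} ‖∂₂g‖_{L²}^{1/2} · ‖h‖_{L²}^{1/2} ‖∂₃h‖_{L²}^{1/2}. -/

import Mathlib

open MeasureTheory Set Function
open scoped ENNReal

/-- Partial derivative in the `i`-th coordinate direction. -/
noncomputable def pd (i : Fin 3) (f : (Fin 3 → ℝ) → ℝ) : (Fin 3 → ℝ) → ℝ :=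
  fun x => fderiv ℝ f x (Pi.single i 1)

/-- L² norm over the upper half-space `{x : x₃ > 0}` of ℝ³. -/
noncomputable def L2H (f : (Fin 3 → ℝ) → ℝ) : ℝ :=
  (eLpNorm f 2 (volume.restrict {x : Fin 3 → ℝ | 0 < x 2})).toReal


lemma lint_CS {α : Type*} [MeasurableSpace α] (ν : Measure α) (u v : α → ℝ≥0∞)
    (hu : Measurable u) (hv : Measurable v) :
    ∫⁻ t, (u t) ^ (1/2:ℝ) * (v t) ^ (1/2:ℝ) ∂ν ≤
      (∫⁻ t, u t ∂ν) ^ (1/2:ℝ) * (∫⁻ t, v t ∂ν) ^ (1/2:ℝ) := by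
  have hpq : (2:ℝ).HolderConjugate 2 := Real.HolderConjugate.two_two
  have h2 : ∀ w : ℝ≥0∞, (w ^ (1/2:ℝ)) ^ (2:ℝ) = w := fun w => by
    rw [← ENNReal.rpow_mul]; norm_num
  have H := ENNReal.lintegral_mul_le_Lp_mul_Lq ν hpq
    (f := fun t => (u t) ^ (1/2:ℝ)) (g := fun t => (v t) ^ (1/2:ℝ))
    ((hu.pow measurable_const).aemeasurable) ((hv.pow measurable_const).aemeasurable)
  simp only [Pi.mul_apply, h2] at H
  exact H
lemma step (μ : ∀ _ : Fin 3, Measure ℝ) [∀ i, SigmaFinite (μ i)]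
    (u v w : (Fin 3 → ℝ) → ℝ≥0∞) (hu : Measurable u) (hv : Measurable v) (hw : Measurable w)
    (i : Fin 3) (su sv sw : Finset (Fin 3)) (hiu : i ∉ su) (hiv : i ∉ sv) (hiw : i ∈ sw) :
    (∫⋯∫⁻_{i}, (fun y => ((∫⋯∫⁻_su, u ∂μ) y) ^ (1/2:ℝ) * ((∫⋯∫⁻_sv, v ∂μ) y) ^ (1/2:ℝ) *
        ((∫⋯∫⁻_sw, w ∂μ) y) ^ (1/2:ℝ)) ∂μ)
      ≤ fun x => ((∫⋯∫⁻_{i} ∪ su, u ∂μ) x) ^ (1/2:ℝ) * ((∫⋯∫⁻_{i} ∪ sv, v ∂μ) x) ^ (1/2:ℝ) *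
        ((∫⋯∫⁻_sw, w ∂μ) x) ^ (1/2:ℝ) := by
  intro x
  have hU : Measurable (∫⋯∫⁻_su, u ∂μ) := hu.lmarginal μ
  have hV : Measurable (∫⋯∫⁻_sv, v ∂μ) := hv.lmarginal μ
  have hUc : Measurable fun t => (∫⋯∫⁻_su, u ∂μ) (update x i t) := hU.comp (measurable_update x)
  have hVc : Measurable fun t => (∫⋯∫⁻_sv, v ∂μ) (update x i t) := hV.comp (measurable_update x)
  rw [lmarginal_singleton]
  calc ∫⁻ t, ((∫⋯∫⁻_su, u ∂μ) (update x i t)) ^ (1/2:ℝ) *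
        ((∫⋯∫⁻_sv, v ∂μ) (update x i t)) ^ (1/2:ℝ) *
        ((∫⋯∫⁻_sw, w ∂μ) (update x i t)) ^ (1/2:ℝ) ∂μ i
      = ∫⁻ t, ((∫⋯∫⁻_sw, w ∂μ) x) ^ (1/2:ℝ) *
          (((∫⋯∫⁻_su, u ∂μ) (update x i t)) ^ (1/2:ℝ) *
           ((∫⋯∫⁻_sv, v ∂μ) (update x i t)) ^ (1/2:ℝ)) ∂μ i := by
        apply lintegral_congr; intro t
        rw [lmarginal_update_of_mem (μ := μ) hiw w]
        ring
    _ = ((∫⋯∫⁻_sw, w ∂μ) x) ^ (1/2:ℝ) *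
          ∫⁻ t, ((∫⋯∫⁻_su, u ∂μ) (update x i t)) ^ (1/2:ℝ) *
           ((∫⋯∫⁻_sv, v ∂μ) (update x i t)) ^ (1/2:ℝ) ∂μ i :=
        lintegral_const_mul _ ((hUc.pow measurable_const).mul (hVc.pow measurable_const))
    _ ≤ ((∫⋯∫⁻_sw, w ∂μ) x) ^ (1/2:ℝ) *
          ((∫⁻ t, (∫⋯∫⁻_su, u ∂μ) (update x i t) ∂μ i) ^ (1/2:ℝ) *
           (∫⁻ t, (∫⋯∫⁻_sv, v ∂μ) (update x i t) ∂μ i) ^ (1/2:ℝ)) :=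
        mul_le_mul_right (lint_CS _ _ _ hUc hVc) _
    _ = ((∫⋯∫⁻_{i} ∪ su, u ∂μ) x) ^ (1/2:ℝ) * ((∫⋯∫⁻_{i} ∪ sv, v ∂μ) x) ^ (1/2:ℝ) *
        ((∫⋯∫⁻_sw, w ∂μ) x) ^ (1/2:ℝ) := by
        rw [lmarginal_union μ u hu (Finset.disjoint_singleton_left.mpr hiu),
          lmarginal_union μ v hv (Finset.disjoint_singleton_left.mpr hiv),
          lmarginal_singleton, lmarginal_singleton]
        ring

lemma grid (μ : ∀ _ : Fin 3, Measure ℝ) [∀ i, SigmaFinite (μ i)]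
    (a b c : (Fin 3 → ℝ) → ℝ≥0∞) (ha : Measurable a) (hb : Measurable b) (hc : Measurable c) :
    ∫⁻ x, ((∫⋯∫⁻_{0}, a ∂μ) x) ^ (1/2:ℝ) * ((∫⋯∫⁻_{1}, b ∂μ) x) ^ (1/2:ℝ) *
        ((∫⋯∫⁻_{2}, c ∂μ) x) ^ (1/2:ℝ) ∂(Measure.pi μ) ≤
      (∫⁻ x, a x ∂(Measure.pi μ)) ^ (1/2:ℝ) * (∫⁻ x, b x ∂(Measure.pi μ)) ^ (1/2:ℝ) *
        (∫⁻ x, c x ∂(Measure.pi μ)) ^ (1/2:ℝ) := by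
  classical
  set P : (Fin 3 → ℝ) → ℝ≥0∞ := fun y => ((∫⋯∫⁻_{0}, a ∂μ) y) ^ (1/2:ℝ) *
    ((∫⋯∫⁻_{1}, b ∂μ) y) ^ (1/2:ℝ) * ((∫⋯∫⁻_{2}, c ∂μ) y) ^ (1/2:ℝ) with hPdef
  have hPm : Measurable P := (((ha.lmarginal μ).pow measurable_const).mul
    ((hb.lmarginal μ).pow measurable_const)).mul ((hc.lmarginal μ).pow measurable_const)
  have h2 := step μ a b c ha hb hc 2 {0} {1} {2} (by decide) (by decide) (by decide)
  have h1 := step μ a c b ha hc hb 1 ({2} ∪ {0}) {2} ({2} ∪ {1})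
    (by decide) (by decide) (by decide)
  have h0 := step μ b c a hb hc ha 0 ({2} ∪ {1}) ({1} ∪ {2}) ({1} ∪ ({2} ∪ {0}))
    (by decide) (by decide) (by decide)
  have e2 : (fun x => ((∫⋯∫⁻_{2} ∪ {0}, a ∂μ) x) ^ (1/2:ℝ) *
      ((∫⋯∫⁻_{2} ∪ {1}, b ∂μ) x) ^ (1/2:ℝ) * ((∫⋯∫⁻_{2}, c ∂μ) x) ^ (1/2:ℝ)) =
      (fun y => ((∫⋯∫⁻_{2} ∪ {0}, a ∂μ) y) ^ (1/2:ℝ) * ((∫⋯∫⁻_{2}, c ∂μ) y) ^ (1/2:ℝ) *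
      ((∫⋯∫⁻_{2} ∪ {1}, b ∂μ) y) ^ (1/2:ℝ)) := funext fun y => by ring
  have e1 : (fun x => ((∫⋯∫⁻_{1} ∪ ({2} ∪ {0}), a ∂μ) x) ^ (1/2:ℝ) *
      ((∫⋯∫⁻_{1} ∪ {2}, c ∂μ) x) ^ (1/2:ℝ) * ((∫⋯∫⁻_{2} ∪ {1}, b ∂μ) x) ^ (1/2:ℝ)) =
      (fun y => ((∫⋯∫⁻_{2} ∪ {1}, b ∂μ) y) ^ (1/2:ℝ) *
      ((∫⋯∫⁻_{1} ∪ {2}, c ∂μ) y) ^ (1/2:ℝ) *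
      ((∫⋯∫⁻_{1} ∪ ({2} ∪ {0}), a ∂μ) y) ^ (1/2:ℝ)) := funext fun y => by ring
  have hd1 : Disjoint ({0} : Finset (Fin 3)) ({1} ∪ {2}) := by decide
  have hd2 : Disjoint ({1} : Finset (Fin 3)) ({2} : Finset (Fin 3)) := by decide
  set x₀ : Fin 3 → ℝ := fun _ => 0
  calc ∫⁻ x, P x ∂(Measure.pi μ) = (∫⋯∫⁻_Finset.univ, P ∂μ) x₀ :=
        lintegral_eq_lmarginal_univ x₀
    _ = (∫⋯∫⁻_{0} ∪ ({1} ∪ {2}), P ∂μ) x₀ := by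
        rw [show (Finset.univ : Finset (Fin 3)) = {0} ∪ ({1} ∪ {2}) from by decide]
    _ = (∫⋯∫⁻_{0}, (∫⋯∫⁻_{1}, (∫⋯∫⁻_{2}, P ∂μ) ∂μ) ∂μ) x₀ := by
        rw [lmarginal_union μ P hPm hd1, lmarginal_union μ P hPm hd2]
    _ ≤ (∫⋯∫⁻_{0}, (∫⋯∫⁻_{1}, (fun y => ((∫⋯∫⁻_{2} ∪ {0}, a ∂μ) y) ^ (1/2:ℝ) *
          ((∫⋯∫⁻_{2}, c ∂μ) y) ^ (1/2:ℝ) *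
          ((∫⋯∫⁻_{2} ∪ {1}, b ∂μ) y) ^ (1/2:ℝ)) ∂μ) ∂μ) x₀ := by
        refine lmarginal_mono (lmarginal_mono ?_) x₀
        rw [← e2]; exact h2
    _ ≤ (∫⋯∫⁻_{0}, (fun y => ((∫⋯∫⁻_{2} ∪ {1}, b ∂μ) y) ^ (1/2:ℝ) *
          ((∫⋯∫⁻_{1} ∪ {2}, c ∂μ) y) ^ (1/2:ℝ) *
          ((∫⋯∫⁻_{1} ∪ ({2} ∪ {0}), a ∂μ) y) ^ (1/2:ℝ)) ∂μ) x₀ := by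
        refine lmarginal_mono ?_ x₀
        rw [← e1]; exact h1
    _ ≤ ((∫⋯∫⁻_{0} ∪ ({2} ∪ {1}), b ∂μ) x₀) ^ (1/2:ℝ) *
          ((∫⋯∫⁻_{0} ∪ ({1} ∪ {2}), c ∂μ) x₀) ^ (1/2:ℝ) *
          ((∫⋯∫⁻_{1} ∪ ({2} ∪ {0}), a ∂μ) x₀) ^ (1/2:ℝ) := h0 x₀
    _ = (∫⁻ x, a x ∂(Measure.pi μ)) ^ (1/2:ℝ) * (∫⁻ x, b x ∂(Measure.pi μ)) ^ (1/2:ℝ) *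
        (∫⁻ x, c x ∂(Measure.pi μ)) ^ (1/2:ℝ) := by
        rw [show ({0} ∪ ({2} ∪ {1}) : Finset (Fin 3)) = Finset.univ from by decide,
          show ({0} ∪ ({1} ∪ {2}) : Finset (Fin 3)) = Finset.univ from by decide,
          show ({1} ∪ ({2} ∪ {0}) : Finset (Fin 3)) = Finset.univ from by decide]
        simp only [lmarginal_univ]
        ring
lemma aux_integrable (φ : ℝ → ℝ) (hφ : ContDiff ℝ 1 φ) (hc : HasCompactSupport φ) :
    Integrable (fun t => 2 * (φ t * deriv φ t)) := by
  have hφc : Continuous φ := hφ.continuous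
  have hd : Continuous (deriv φ) := hφ.continuous_deriv le_rfl
  have hcs : HasCompactSupport (fun t => φ t * deriv φ t) := hc.mul_right
  have hcs2 : HasCompactSupport (fun t => 2 * (φ t * deriv φ t)) :=
    HasCompactSupport.mul_left (f := fun _ => (2:ℝ)) hcs
  exact (continuous_const.mul (hφc.mul hd)).integrable_of_hasCompactSupport hcs2

lemma sq_eq_sub (φ : ℝ → ℝ) (hφ : ContDiff ℝ 1 φ) (hc : HasCompactSupport φ) (L s : ℝ) :
    φ s ^ 2 - φ L ^ 2 = ∫ t in L..s, 2 * (φ t * deriv φ t) := by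
  have hd : ∀ t ∈ uIcc L s, HasDerivAt (fun y => φ y ^ 2) (2 * (φ t * deriv φ t)) t := by
    intro t _
    have h1 : HasDerivAt φ (deriv φ t) t :=
      ((hφ.differentiable one_ne_zero) t).hasDerivAt
    simpa [mul_assoc, mul_comm, mul_left_comm] using h1.fun_pow 2
  rw [intervalIntegral.integral_eq_sub_of_hasDerivAt hd
    ((aux_integrable φ hφ hc).intervalIntegrable)]

lemma sq_le_set (φ : ℝ → ℝ) (hφ : ContDiff ℝ 1 φ) (hc : HasCompactSupport φ)
    {L s : ℝ} (hLs : L ≤ s) (hL : φ L = 0) (S : Set ℝ) (hsub : Ioc L s ⊆ S) :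
    φ s ^ 2 ≤ ∫ t in S, |2 * (φ t * deriv φ t)| := by
  have hint := aux_integrable φ hφ hc
  have h1 : φ s ^ 2 = ∫ t in Ioc L s, 2 * (φ t * deriv φ t) := by
    have := sq_eq_sub φ hφ hc L s
    rw [hL] at this
    simp only [intervalIntegral.integral_of_le hLs] at this
    linarith
  calc φ s ^ 2 ≤ ∫ t in Ioc L s, |2 * (φ t * deriv φ t)| := by
        rw [h1]
        exact integral_mono hint.integrableOn hint.abs.integrableOn
          (fun t => le_abs_self _)
    _ ≤ ∫ t in S, |2 * (φ t * deriv φ t)| :=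
        setIntegral_mono_set hint.abs.integrableOn
          (ae_of_all _ fun t => abs_nonneg _) (HasSubset.Subset.eventuallyLE hsub)

lemma sq_le_set' (φ : ℝ → ℝ) (hφ : ContDiff ℝ 1 φ) (hc : HasCompactSupport φ)
    {s U : ℝ} (hsU : s ≤ U) (hU : φ U = 0) (S : Set ℝ) (hsub : Ioc s U ⊆ S) :
    φ s ^ 2 ≤ ∫ t in S, |2 * (φ t * deriv φ t)| := by
  have hint := aux_integrable φ hφ hc
  have h1 : φ s ^ 2 = -∫ t in Ioc s U, 2 * (φ t * deriv φ t) := by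
    have := sq_eq_sub φ hφ hc s U
    rw [hU] at this
    simp only [intervalIntegral.integral_of_le hsU] at this
    linarith
  calc φ s ^ 2 ≤ |∫ t in Ioc s U, 2 * (φ t * deriv φ t)| := by
        rw [h1]; exact (neg_le_abs _)
    _ ≤ ∫ t in Ioc s U, |2 * (φ t * deriv φ t)| := by
        simpa only [Real.norm_eq_abs] using
          norm_integral_le_integral_norm (μ := volume.restrict (Ioc s U))
            (fun t => 2 * (φ t * deriv φ t))
    _ ≤ ∫ t in S, |2 * (φ t * deriv φ t)| :=
        setIntegral_mono_set hint.abs.integrableOn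
          (ae_of_all _ fun t => abs_nonneg _) (HasSubset.Subset.eventuallyLE hsub)

lemma ofReal_sq_le (φ : ℝ → ℝ) (hφ : ContDiff ℝ 1 φ) (hc : HasCompactSupport φ)
    (s : ℝ) (S : Set ℝ) (hsq : φ s ^ 2 ≤ ∫ t in S, |2 * (φ t * deriv φ t)|) :
    (‖φ s‖₊ : ℝ≥0∞) ^ (2:ℕ) ≤ 2 * ∫⁻ t in S, ‖φ t‖₊ * ‖deriv φ t‖₊ := by
  have hint := (aux_integrable φ hφ hc).abs.integrableOn (s := S)
  have h0 : (‖φ s‖₊ : ℝ≥0∞) ^ (2:ℕ) = ENNReal.ofReal (φ s ^ 2) := by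
    rw [← enorm_eq_nnnorm, Real.enorm_eq_ofReal_abs, ← ENNReal.ofReal_pow (abs_nonneg _), sq_abs]
  rw [h0]
  calc ENNReal.ofReal (φ s ^ 2)
      ≤ ENNReal.ofReal (∫ t in S, |2 * (φ t * deriv φ t)|) :=
        ENNReal.ofReal_le_ofReal hsq
    _ = ∫⁻ t in S, ENNReal.ofReal |2 * (φ t * deriv φ t)| :=
        ofReal_integral_eq_lintegral_ofReal hint
          (ae_of_all _ fun t => abs_nonneg _)
    _ = ∫⁻ t in S, 2 * ((‖φ t‖₊ : ℝ≥0∞) * ‖deriv φ t‖₊) := by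
        congr 1; ext t
        rw [abs_mul, abs_mul, ENNReal.ofReal_mul (by norm_num),
          ENNReal.ofReal_mul (abs_nonneg _), ← enorm_eq_nnnorm, Real.enorm_eq_ofReal_abs,
          ← enorm_eq_nnnorm, Real.enorm_eq_ofReal_abs]
        norm_num
    _ = 2 * ∫⁻ t in S, (‖φ t‖₊ : ℝ≥0∞) * ‖deriv φ t‖₊ :=
        lintegral_const_mul' _ _ (by norm_num)

section Phi
variable (f : (Fin 3 → ℝ) → ℝ) (i : Fin 3) (x : Fin 3 → ℝ)

lemma phi_contDiff (hf : ContDiff ℝ (⊤ : ℕ∞) f) :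
    ContDiff ℝ 1 (fun t => f (update x i t)) :=
  (hf.comp (contDiff_update _ x i)).of_le (by exact_mod_cast le_top)

lemma phi_deriv (hf : ContDiff ℝ (⊤ : ℕ∞) f) (t : ℝ) :
    deriv (fun t => f (update x i t)) t = pd i f (update x i t) := by
  have h1 : HasDerivAt (fun t => f (update x i t))
      (fderiv ℝ f (update x i t) (Pi.single i 1)) t :=
    (hf.differentiable (by simp) (update x i t)).hasFDerivAt.comp_hasDerivAt t
      (hasDerivAt_update x i t)
  exact h1.deriv

lemma phi_supp (hs : HasCompactSupport f) :
    HasCompactSupport (fun t => f (update x i t)) := by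
  obtain ⟨r, hr⟩ := hs.isCompact.isBounded.subset_closedBall 0
  apply HasCompactSupport.intro (isCompact_Icc (a := -(r+1)) (b := r+1))
  intro t ht
  by_contra hne
  have hmem : update x i t ∈ tsupport f := subset_tsupport f hne
  have h2 : ‖update x i t‖ ≤ r := by simpa using hr hmem
  have h3 : |t| ≤ r := by
    have := norm_le_pi_norm (update x i t) i
    simpa using this.trans h2
  have : t ∈ Icc (-(r+1)) (r+1) := by
    rw [abs_le] at h3
    constructor <;> [linarith [h3.1]; linarith [h3.2]]
  exact ht this

lemma phi_zero_far (hs : HasCompactSupport f) {r : ℝ}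
    (hr : tsupport f ⊆ Metric.closedBall 0 r) {t : ℝ} (ht : r + 1 ≤ |t|) :
    f (update x i t) = 0 := by
  by_contra hne
  have hmem : update x i t ∈ tsupport f := subset_tsupport f hne
  have h2 : ‖update x i t‖ ≤ r := by simpa using hr hmem
  have h3 : |t| ≤ r := by
    have := norm_le_pi_norm (update x i t) i
    simpa using this.trans h2
  linarith

end Phi

lemma pointwise_full (f : (Fin 3 → ℝ) → ℝ) (hf : ContDiff ℝ (⊤ : ℕ∞) f)
    (hs : HasCompactSupport f) (i : Fin 3) (x : Fin 3 → ℝ) :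
    (‖f x‖₊ : ℝ≥0∞) ^ (2:ℕ) ≤
      2 * ∫⁻ t, ‖f (update x i t)‖₊ * ‖pd i f (update x i t)‖₊ := by
  set φ : ℝ → ℝ := fun t => f (update x i t) with hφdef
  have hφ : ContDiff ℝ 1 φ := phi_contDiff f i x hf
  have hφc : HasCompactSupport φ := phi_supp f i x hs
  obtain ⟨r, hr⟩ := hs.isCompact.isBounded.subset_closedBall 0
  set R := max r 0 with hRdef
  have hR : tsupport f ⊆ Metric.closedBall 0 R :=
    hr.trans (Metric.closedBall_subset_closedBall (le_max_left _ _))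
  set L := min (x i) (-(R+1)) with hLdef
  have hL0 : φ L = 0 := by
    apply phi_zero_far f i x hs hR
    have h1 : L ≤ -(R+1) := min_le_right _ _
    have h2 : R + 1 ≤ -L := by linarith
    exact h2.trans (neg_le_abs L)
  have key := ofReal_sq_le φ hφ hφc (x i) univ
    (sq_le_set φ hφ hφc (min_le_left _ _) hL0 univ (subset_univ _))
  calc (‖f x‖₊ : ℝ≥0∞) ^ (2:ℕ) = (‖φ (x i)‖₊ : ℝ≥0∞) ^ (2:ℕ) := by
        rw [hφdef]; simp [Function.update_eq_self]
    _ ≤ 2 * ∫⁻ t in univ, ‖φ t‖₊ * ‖deriv φ t‖₊ := key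
    _ = 2 * ∫⁻ t, ‖f (update x i t)‖₊ * ‖pd i f (update x i t)‖₊ := by
        rw [Measure.restrict_univ]; congr 1
        apply lintegral_congr; intro t
        rw [phi_deriv f i x hf t]

lemma pointwise_half (f : (Fin 3 → ℝ) → ℝ) (hf : ContDiff ℝ (⊤ : ℕ∞) f)
    (hs : HasCompactSupport f) (x : Fin 3 → ℝ) (hx : 0 < x 2) :
    (‖f x‖₊ : ℝ≥0∞) ^ (2:ℕ) ≤
      2 * ∫⁻ t in Ioi (0:ℝ), ‖f (update x 2 t)‖₊ * ‖pd 2 f (update x 2 t)‖₊ := by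
  set φ : ℝ → ℝ := fun t => f (update x 2 t) with hφdef
  have hφ : ContDiff ℝ 1 φ := phi_contDiff f 2 x hf
  have hφc : HasCompactSupport φ := phi_supp f 2 x hs
  obtain ⟨r, hr⟩ := hs.isCompact.isBounded.subset_closedBall 0
  set R := max r 0 with hRdef
  have hR : tsupport f ⊆ Metric.closedBall 0 R :=
    hr.trans (Metric.closedBall_subset_closedBall (le_max_left _ _))
  set U := max (x 2) (R+1) with hUdef
  have hU0 : φ U = 0 := by
    apply phi_zero_far f 2 x hs hR
    have h1 : R + 1 ≤ U := le_max_right _ _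
    exact h1.trans (le_abs_self U)
  have hsub : Ioc (x 2) U ⊆ Ioi (0:ℝ) := fun t ht => lt_trans hx ht.1
  have key := ofReal_sq_le φ hφ hφc (x 2) (Ioi 0)
    (sq_le_set' φ hφ hφc (le_max_left _ _) hU0 (Ioi 0) hsub)
  calc (‖f x‖₊ : ℝ≥0∞) ^ (2:ℕ) = (‖φ (x 2)‖₊ : ℝ≥0∞) ^ (2:ℕ) := by
        rw [hφdef]; simp [Function.update_eq_self]
    _ ≤ 2 * ∫⁻ t in Ioi (0:ℝ), ‖φ t‖₊ * ‖deriv φ t‖₊ := key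
    _ = 2 * ∫⁻ t in Ioi (0:ℝ), ‖f (update x 2 t)‖₊ * ‖pd 2 f (update x 2 t)‖₊ := by
        congr 1
        apply lintegral_congr; intro t
        rw [phi_deriv f 2 x hf t]


noncomputable def muH : Fin 3 → Measure ℝ := fun i =>
  if i = 2 then volume.restrict (Set.Ioi 0) else volume

instance (i : Fin 3) : SigmaFinite (muH i) := by
  unfold muH; split <;> infer_instance

lemma muH0 : muH 0 = volume := by simp [muH]
lemma muH1 : muH 1 = volume := by simp [muH]
lemma muH2 : muH 2 = volume.restrict (Set.Ioi 0) := by simp [muH]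

lemma measure_eq :
    (volume : Measure (Fin 3 → ℝ)).restrict {x : Fin 3 → ℝ | 0 < x 2} = Measure.pi muH := by
  have hset : {x : Fin 3 → ℝ | 0 < x 2} =
      Set.pi univ (fun i => if i = 2 then Ioi (0:ℝ) else univ) := by
    ext x
    simp only [Set.mem_setOf_eq, Set.mem_pi, Set.mem_univ, forall_true_left]
    constructor
    · intro hx i; fin_cases i <;> simp [hx]
    · intro hx; have := hx 2; simpa using this
  rw [hset]
  refine (Measure.pi_eq fun t ht => ?_).symm
  have hS : ∀ i : Fin 3, MeasurableSet (if i = 2 then Ioi (0:ℝ) else univ) := by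
    intro i; split <;> [exact measurableSet_Ioi; exact MeasurableSet.univ]
  rw [Measure.restrict_apply (MeasurableSet.univ_pi ht), ← Set.pi_inter_distrib,
    volume_pi_pi]
  refine Finset.prod_congr rfl fun i _ => ?_
  fin_cases i
  · simp [muH]
  · simp [muH]
  · simp [muH, Measure.restrict_apply (ht 2)]

lemma le_rpow_half {w z : ℝ≥0∞} (hw : w ^ (2:ℕ) ≤ z) : w ≤ z ^ (1/2:ℝ) := by
  calc w = (w ^ (2:ℕ)) ^ (1/2:ℝ) := by
        rw [← ENNReal.rpow_natCast, ← ENNReal.rpow_mul]; norm_num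
    _ ≤ z ^ (1/2:ℝ) := ENNReal.rpow_le_rpow hw (by norm_num)

noncomputable def aEnn (u : (Fin 3 → ℝ) → ℝ) (i : Fin 3) : (Fin 3 → ℝ) → ℝ≥0∞ :=
  fun y => (2:ℝ≥0∞) * ((‖u y‖₊ : ℝ≥0∞) * ‖pd i u y‖₊)

lemma pd_continuous (u : (Fin 3 → ℝ) → ℝ) (hu : ContDiff ℝ (⊤ : ℕ∞) u) (i : Fin 3) :
    Continuous (pd i u) :=
  (hu.continuous_fderiv (by simp)).clm_apply continuous_const

lemma aEnn_measurable (u : (Fin 3 → ℝ) → ℝ) (hu : ContDiff ℝ (⊤ : ℕ∞) u) (i : Fin 3) :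
    Measurable (aEnn u i) :=
  measurable_const.mul ((hu.continuous.measurable.nnnorm.coe_nnreal_ennreal).mul
    ((pd_continuous u hu i).measurable.nnnorm.coe_nnreal_ennreal))

lemma lmarg_eval (u : (Fin 3 → ℝ) → ℝ) (i : Fin 3) (x : Fin 3 → ℝ) :
    (∫⋯∫⁻_{i}, aEnn u i ∂muH) x =
      2 * ∫⁻ t, (‖u (update x i t)‖₊ : ℝ≥0∞) * ‖pd i u (update x i t)‖₊ ∂(muH i) := by
  rw [lmarginal_singleton]
  exact lintegral_const_mul' _ _ (by norm_num)

lemma factor_full (u : (Fin 3 → ℝ) → ℝ) (hu : ContDiff ℝ (⊤ : ℕ∞) u)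
    (hus : HasCompactSupport u) (i : Fin 3) (hvol : muH i = volume) (x : Fin 3 → ℝ) :
    (‖u x‖₊ : ℝ≥0∞) ≤ ((∫⋯∫⁻_{i}, aEnn u i ∂muH) x) ^ (1/2:ℝ) := by
  apply le_rpow_half
  rw [lmarg_eval, hvol]
  exact pointwise_full u hu hus i x

lemma factor_half (u : (Fin 3 → ℝ) → ℝ) (hu : ContDiff ℝ (⊤ : ℕ∞) u)
    (hus : HasCompactSupport u) (x : Fin 3 → ℝ) (hx : 0 < x 2) :
    (‖u x‖₊ : ℝ≥0∞) ≤ ((∫⋯∫⁻_{2}, aEnn u 2 ∂muH) x) ^ (1/2:ℝ) := by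
  apply le_rpow_half
  rw [lmarg_eval, muH2]
  exact pointwise_half u hu hus x hx

lemma lint_mul_le {ν : Measure (Fin 3 → ℝ)} (u v : (Fin 3 → ℝ) → ℝ)
    (hu : Measurable u) (hv : Measurable v) :
    ∫⁻ y, (‖u y‖₊ : ℝ≥0∞) * ‖v y‖₊ ∂ν ≤ eLpNorm u 2 ν * eLpNorm v 2 ν := by
  have hpq : (2:ℝ).HolderConjugate 2 := Real.HolderConjugate.two_two
  have H := ENNReal.lintegral_mul_le_Lp_mul_Lq ν hpq
    (f := fun y => (‖u y‖₊ : ℝ≥0∞)) (g := fun y => (‖v y‖₊ : ℝ≥0∞))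
    (hu.nnnorm.coe_nnreal_ennreal.aemeasurable) (hv.nnnorm.coe_nnreal_ennreal.aemeasurable)
  have heu : eLpNorm u 2 ν = (∫⁻ y, (‖u y‖₊ : ℝ≥0∞) ^ (2:ℝ) ∂ν) ^ (1/2:ℝ) := by
    rw [eLpNorm_eq_lintegral_rpow_enorm_toReal (by norm_num) (by norm_num)]
    norm_num
    rfl
  have hev : eLpNorm v 2 ν = (∫⁻ y, (‖v y‖₊ : ℝ≥0∞) ^ (2:ℝ) ∂ν) ^ (1/2:ℝ) := by
    rw [eLpNorm_eq_lintegral_rpow_enorm_toReal (by norm_num) (by norm_num)]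
    norm_num
    rfl
  rw [heu, hev]
  simpa using H

lemma eLpNorm_fin (u : (Fin 3 → ℝ) → ℝ) (hu : Continuous u) (hus : HasCompactSupport u)
    {ν : Measure (Fin 3 → ℝ)} (hle : ν ≤ volume) : eLpNorm u 2 ν ≠ ⊤ := by
  have h1 : eLpNorm u 2 ν ≤ eLpNorm u 2 volume := eLpNorm_mono_measure _ hle
  have h2 := (hu.memLp_of_hasCompactSupport (p := 2) (μ := volume) hus).2
  exact (lt_of_le_of_lt h1 h2).ne

/-- Trilinear anisotropic estimate: each factor contributes one derivative in
a different coordinate direction. -/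
theorem stmt2 :
    ∃ C > (0 : ℝ), ∀ f g h : (Fin 3 → ℝ) → ℝ,
      ContDiff ℝ (⊤ : ℕ∞) f → HasCompactSupport f →
      ContDiff ℝ (⊤ : ℕ∞) g → HasCompactSupport g →
      ContDiff ℝ (⊤ : ℕ∞) h → HasCompactSupport h →
      (∫ x in {x : Fin 3 → ℝ | 0 < x 2}, |f x * g x * h x|) ≤
        C * (L2H f ^ (1/2 : ℝ) * L2H (pd 0 f) ^ (1/2 : ℝ)) *
          (L2H g ^ (1/2 : ℝ) * L2H (pd 1 g) ^ (1/2 : ℝ)) *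
          (L2H h ^ (1/2 : ℝ) * L2H (pd 2 h) ^ (1/2 : ℝ)) := by
  refine ⟨(8:ℝ) ^ (1/2:ℝ), by positivity, ?_⟩
  intro f g h hf hfs hg hgs hh hhs
  set S : Set (Fin 3 → ℝ) := {x : Fin 3 → ℝ | 0 < x 2} with hSdef
  set ν : Measure (Fin 3 → ℝ) := volume.restrict S with hνdef
  have hνle : ν ≤ volume := Measure.restrict_le_self
  have hfc : Continuous f := hf.continuous
  have hgc : Continuous g := hg.continuous
  have hhc : Continuous h := hh.continuous
  have hpdf : Continuous (pd 0 f) := pd_continuous f hf 0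
  have hpdg : Continuous (pd 1 g) := pd_continuous g hg 1
  have hpdh : Continuous (pd 2 h) := pd_continuous h hh 2
  have hpdfs : HasCompactSupport (pd 0 f) := hfs.fderiv_apply ℝ _
  have hpdgs : HasCompactSupport (pd 1 g) := hgs.fderiv_apply ℝ _
  have hpdhs : HasCompactSupport (pd 2 h) := hhs.fderiv_apply ℝ _
  have ha := aEnn_measurable f hf 0
  have hb := aEnn_measurable g hg 1
  have hc := aEnn_measurable h hh 2
  -- left-hand side as a lintegral
  have hLHS : (∫ x in S, |f x * g x * h x|) =
      (∫⁻ x, (‖f x * g x * h x‖₊ : ℝ≥0∞) ∂ν).toReal := by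
    rw [integral_eq_lintegral_of_nonneg_ae (f := fun x => |f x * g x * h x|) (ae_of_all _ fun x => abs_nonneg _)
      (((hfc.mul hgc).mul hhc).abs.aestronglyMeasurable)]
    congr 1
    apply lintegral_congr
    intro x
    rw [← enorm_eq_nnnorm, Real.enorm_eq_ofReal_abs]
  -- a.e. pointwise bound
  have hae : ∀ᵐ x ∂(Measure.pi muH), (‖f x * g x * h x‖₊ : ℝ≥0∞) ≤
      ((∫⋯∫⁻_{0}, aEnn f 0 ∂muH) x) ^ (1/2:ℝ) * ((∫⋯∫⁻_{1}, aEnn g 1 ∂muH) x) ^ (1/2:ℝ) *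
      ((∫⋯∫⁻_{2}, aEnn h 2 ∂muH) x) ^ (1/2:ℝ) := by
    have hnull : Measure.pi muH {x : Fin 3 → ℝ | ¬ 0 < x 2} = 0 := by
      have h1 : {x : Fin 3 → ℝ | ¬ 0 < x 2} = (fun x : Fin 3 → ℝ => x 2) ⁻¹' (Iic 0) := by
        ext x; simp [not_lt]
      rw [h1]
      apply Measure.pi_eval_preimage_null
      rw [muH2, Measure.restrict_apply measurableSet_Iic]
      simp [Set.Iic_inter_Ioi]
    have h2 : ∀ᵐ x ∂(Measure.pi muH), 0 < x 2 := by
      rw [ae_iff]; exact hnull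
    filter_upwards [h2] with x hx
    have heq : (‖f x * g x * h x‖₊ : ℝ≥0∞) = (‖f x‖₊ : ℝ≥0∞) * ‖g x‖₊ * ‖h x‖₊ := by
      push_cast [nnnorm_mul]; ring
    rw [heq]
    exact mul_le_mul' (mul_le_mul' (factor_full f hf hfs 0 muH0 x)
      (factor_full g hg hgs 1 muH1 x)) (factor_half h hh hhs x hx)
  -- main lintegral bound
  have hbound : ∫⁻ x, (‖f x * g x * h x‖₊ : ℝ≥0∞) ∂ν ≤
      (∫⁻ y, aEnn f 0 y ∂(Measure.pi muH)) ^ (1/2:ℝ) *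
      (∫⁻ y, aEnn g 1 y ∂(Measure.pi muH)) ^ (1/2:ℝ) *
      (∫⁻ y, aEnn h 2 y ∂(Measure.pi muH)) ^ (1/2:ℝ) := by
    rw [hνdef, hSdef, measure_eq]
    exact (lintegral_mono_ae hae).trans (grid muH (aEnn f 0) (aEnn g 1) (aEnn h 2) ha hb hc)
  -- bound each marginal integral by eLpNorms
  have key : ∀ (u : (Fin 3 → ℝ) → ℝ) (i : Fin 3), Measurable u → Measurable (pd i u) →
      ∫⁻ y, aEnn u i y ∂(Measure.pi muH) ≤ 2 * (eLpNorm u 2 ν * eLpNorm (pd i u) 2 ν) := by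
    intro u i hum hpdm
    rw [← measure_eq, ← hSdef, ← hνdef]
    calc ∫⁻ y, aEnn u i y ∂ν = 2 * ∫⁻ y, (‖u y‖₊ : ℝ≥0∞) * ‖pd i u y‖₊ ∂ν :=
          lintegral_const_mul' _ _ (by norm_num)
      _ ≤ 2 * (eLpNorm u 2 ν * eLpNorm (pd i u) 2 ν) :=
          mul_le_mul_right (lint_mul_le u (pd i u) hum hpdm) _
  have hkf := key f 0 hfc.measurable hpdf.measurable
  have hkg := key g 1 hgc.measurable hpdg.measurable
  have hkh := key h 2 hhc.measurable hpdh.measurable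
  have htot : ∫⁻ x, (‖f x * g x * h x‖₊ : ℝ≥0∞) ∂ν ≤
      (2 * (eLpNorm f 2 ν * eLpNorm (pd 0 f) 2 ν)) ^ (1/2:ℝ) *
      (2 * (eLpNorm g 2 ν * eLpNorm (pd 1 g) 2 ν)) ^ (1/2:ℝ) *
      (2 * (eLpNorm h 2 ν * eLpNorm (pd 2 h) 2 ν)) ^ (1/2:ℝ) :=
    hbound.trans (mul_le_mul' (mul_le_mul' (ENNReal.rpow_le_rpow hkf (by norm_num))
      (ENNReal.rpow_le_rpow hkg (by norm_num))) (ENNReal.rpow_le_rpow hkh (by norm_num)))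
  -- finiteness
  have hFf := eLpNorm_fin f hfc hfs hνle
  have hFg := eLpNorm_fin g hgc hgs hνle
  have hFh := eLpNorm_fin h hhc hhs hνle
  have hFdf := eLpNorm_fin (pd 0 f) hpdf hpdfs hνle
  have hFdg := eLpNorm_fin (pd 1 g) hpdg hpdgs hνle
  have hFdh := eLpNorm_fin (pd 2 h) hpdh hpdhs hνle
  have hfin : (2 * (eLpNorm f 2 ν * eLpNorm (pd 0 f) 2 ν)) ^ (1/2:ℝ) *
      (2 * (eLpNorm g 2 ν * eLpNorm (pd 1 g) 2 ν)) ^ (1/2:ℝ) *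
      (2 * (eLpNorm h 2 ν * eLpNorm (pd 2 h) 2 ν)) ^ (1/2:ℝ) ≠ ⊤ := by
    apply ENNReal.mul_ne_top
    apply ENNReal.mul_ne_top
    all_goals
      apply ENNReal.rpow_ne_top_of_nonneg (by norm_num)
      exact ENNReal.mul_ne_top (by norm_num)
        (ENNReal.mul_ne_top (by assumption) (by assumption))
  -- pass to real numbers
  rw [hLHS]
  have step1 := ENNReal.toReal_mono hfin htot
  refine step1.trans ?_
  have hconv : ∀ (A B : ℝ≥0∞), A ≠ ⊤ → B ≠ ⊤ →
      ((2 * (A * B)) ^ (1/2:ℝ)).toReal =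
        2 ^ (1/2:ℝ) * (A.toReal ^ (1/2:ℝ) * B.toReal ^ (1/2:ℝ)) := by
    intro A B hA hB
    rw [← ENNReal.toReal_rpow, ENNReal.toReal_mul, ENNReal.toReal_mul,
      ENNReal.toReal_ofNat, Real.mul_rpow (by norm_num)
      (mul_nonneg ENNReal.toReal_nonneg ENNReal.toReal_nonneg),
      Real.mul_rpow ENNReal.toReal_nonneg ENNReal.toReal_nonneg]
  rw [ENNReal.toReal_mul, ENNReal.toReal_mul, hconv _ _ hFf hFdf, hconv _ _ hFg hFdg,
    hconv _ _ hFh hFdh]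
  have h8 : (8:ℝ) ^ (1/2:ℝ) = 2 ^ (1/2:ℝ) * 2 ^ (1/2:ℝ) * 2 ^ (1/2:ℝ) := by
    rw [← Real.mul_rpow (by norm_num) (by norm_num),
      ← Real.mul_rpow (by norm_num) (by norm_num)]
    norm_num
  have hL2 : ∀ u : (Fin 3 → ℝ) → ℝ, L2H u = (eLpNorm u 2 ν).toReal := fun u => rfl
  rw [h8, hL2 f, hL2 g, hL2 h, hL2 (pd 0 f), hL2 (pd 1 g), hL2 (pd 2 h)]
  ring_nf
  exact le_refl _
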